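/- Let f ∈ ℍ[X] be nonzero of degree n. If λ₁, …, λ_k ∈ ℍ \ ℝ are spherical roots of f that are pairwise not quadratically equivalent, then 2k ≤ n. In other words, f has at most ⌊n/2⌋ quadratic-equivalence classes of spherical roots. -/

import Mathlib

/-!
For non-real `λ` the real polynomial `p_λ = X² − tr(λ) X + n(λ)` is central in `ℍ[X]`, so
`f = p_λ · g` gives `f(r) = g(r) p_λ(r)`. A spherical root `λ` of `f` forces `p_λ ∣ f`: the
remainder of `f` modulo `p_λ` has degree at most one and vanishes at the two distinct roots `λ`
and `λ̄`. Every root `r` of `p_λ` is non-real, so `p_λ` is the minimal polynomial of `r` over `ℝ`;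
hence `p_μ(r) ≠ 0` unless `μ` is quadratically equivalent to `λ`, and the quotient `f / p_μ`
keeps all spherical roots not equivalent to `μ`. Dividing out the `p_{λ_i}` one at a time costs
degree two per class.
-/

open Polynomial

/-- A spherical root of `f ∈ ℍ[X]`: a non-real `λ` such that every root of the
characteristic polynomial `p_λ(x) = x² − tr(λ)x + n(λ)` of `λ` is a root of `f`. -/
def SphericalRoot (f : Polynomial (Quaternion ℝ)) (lam : Quaternion ℝ) : Prop :=
  lam ∉ Set.range (algebraMap ℝ (Quaternion ℝ)) ∧
    ∀ r : Quaternion ℝ,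
      r ^ 2 - (2 * lam.re) • r + ((Quaternion.normSq lam : ℝ) : Quaternion ℝ) = 0 →
        Polynomial.eval r f = 0

/-- Quadratic equivalence on ℍ: equal traces and norms. -/
def QuadEquiv (r lam : Quaternion ℝ) : Prop :=
  2 * r.re = 2 * lam.re ∧ Quaternion.normSq r = Quaternion.normSq lam

namespace Polynomial

section Algebra

variable {R A : Type*} [CommSemiring R] [Semiring A] [Algebra R A]

theorem commute_map_algebraMap (Q : R[X]) (p : A[X]) : Commute (Q.map (algebraMap R A)) p := by
  have hQ : Q.map (algebraMap R A) = aeval (X : A[X]) Q := rfl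
  rw [hQ, aeval_eq_smeval]
  exact smeval_commute_left _ _ (commute_X p)

theorem eval_map_algebraMap_mul (Q : R[X]) (p : A[X]) (x : A) :
    eval x (Q.map (algebraMap R A) * p) = eval x p * aeval x Q := by
  rw [(commute_map_algebraMap Q p).eq, ← eval_map_algebraMap]
  exact eval₂_mul_noncomm _ _ fun k => by
    simpa only [coeff_map, RingHom.id_apply] using Algebra.commute_algebraMap_left (Q.coeff k) x

end Algebra

theorem eq_zero_of_degree_le_one_of_eval_eq_zero {D : Type*} [Ring D] [NoZeroDivisors D]
    {p : D[X]} (hp : p.degree ≤ 1) {x y : D} (hxy : x ≠ y) (hx : eval x p = 0)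
    (hy : eval y p = 0) : p = 0 := by
  set a := p.coeff 1
  set b := p.coeff 0
  have hab : p = C a * X + C b := eq_X_add_C_of_degree_le_one hp
  simp only [hab, eval_add, eval_C_mul, eval_X, eval_C] at hx hy
  have ha : a = 0 := by
    refine (mul_eq_zero.mp ?_).resolve_right (sub_ne_zero.mpr hxy)
    rw [mul_sub, sub_eq_zero]
    exact add_right_cancel (hx.trans hy.symm)
  rw [ha, zero_mul, zero_add] at hx
  rw [hab, ha, hx, C_0, zero_mul, add_zero]

theorem map_dvd_of_eval_eq_zero {R A : Type*} [CommSemiring R] [Ring A] [NoZeroDivisors A]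
    [Algebra R A] {Q : R[X]} (hQ : Q.Monic) (hdeg : Q.natDegree = 2) {x y : A} (hxy : x ≠ y)
    (hQx : aeval x Q = 0) (hQy : aeval y Q = 0) {p : A[X]} (hx : eval x p = 0)
    (hy : eval y p = 0) : Q.map (algebraMap R A) ∣ p := by
  nontriviality A
  have hQA : (Q.map (algebraMap R A)).Monic := hQ.map _
  have eval_modByMonic : ∀ z, aeval z Q = 0 → eval z (p %ₘ Q.map (algebraMap R A)) = eval z p :=
    fun z hz => by
      conv_rhs => rw [← modByMonic_add_div p (Q.map (algebraMap R A))]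
      rw [eval_add, eval_map_algebraMap_mul, hz, mul_zero, add_zero]
  have hdeg_mod : (p %ₘ Q.map (algebraMap R A)).degree < 2 := by
    have := degree_modByMonic_lt p hQA
    rwa [degree_eq_natDegree hQA.ne_zero, hQ.natDegree_map, hdeg] at this
  rw [← modByMonic_eq_zero_iff_dvd hQA]
  exact eq_zero_of_degree_le_one_of_eval_eq_zero (Order.le_of_lt_succ hdeg_mod) hxy
    ((eval_modByMonic x hQx).trans hx) ((eval_modByMonic y hQy).trans hy)

end Polynomial

open scoped Quaternion

namespace Quaternion

noncomputable def charPoly (a : ℍ[ℝ]) : ℝ[X] :=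
  X ^ 2 - C (2 * a.re) * X + C (normSq a)

theorem natDegree_charPoly (a : ℍ[ℝ]) : (charPoly a).natDegree = 2 := by
  unfold charPoly; compute_degree!

theorem monic_charPoly (a : ℍ[ℝ]) : (charPoly a).Monic := by
  unfold charPoly; monicity!

theorem coeff_charPoly_one (a : ℍ[ℝ]) : (charPoly a).coeff 1 = -(2 * a.re) := by
  simp [charPoly, coeff_C]

theorem coeff_charPoly_zero (a : ℍ[ℝ]) : (charPoly a).coeff 0 = normSq a := by
  simp [charPoly, coeff_C]

theorem natDegree_map_charPoly_mul (a : ℍ[ℝ]) {g : ℍ[ℝ][X]} (hg : g ≠ 0) :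
    ((charPoly a).map (algebraMap ℝ ℍ[ℝ]) * g).natDegree = 2 + g.natDegree := by
  rw [((monic_charPoly a).map _).natDegree_mul' hg, (monic_charPoly a).natDegree_map,
    natDegree_charPoly]

theorem aeval_charPoly (a r : ℍ[ℝ]) :
    aeval r (charPoly a) = r ^ 2 - (2 * a.re) • r + ((normSq a : ℝ) : ℍ[ℝ]) := by
  simp only [charPoly, map_add, map_sub, map_mul, map_pow, aeval_X, aeval_C, Algebra.smul_def]
  rfl

theorem aeval_charPoly_self (a : ℍ[ℝ]) : aeval a (charPoly a) = 0 := by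
  rw [aeval_charPoly, ← coe_mul_eq_smul, ← self_add_star', ← star_mul_self, sq]
  noncomm_ring

theorem aeval_charPoly_star (a : ℍ[ℝ]) : aeval (star a) (charPoly a) = 0 := by
  simpa only [charPoly, re_star, normSq_star] using aeval_charPoly_self (star a)

theorem re_sq_lt_normSq {a : ℍ[ℝ]} (ha : a ∉ Set.range (algebraMap ℝ ℍ[ℝ])) :
    a.re ^ 2 < normSq a := by
  have him : a.im ≠ 0 := fun h => ha ⟨a.re, by simpa [algebraMap_def, h] using re_add_im a⟩
  have hsplit : normSq a = a.re ^ 2 + normSq a.im := by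
    simp only [normSq_def', re_im, imI_im, imJ_im, imK_im]; ring
  nlinarith [normSq_nonneg.lt_of_ne' (normSq_ne_zero.mpr him)]

theorem eval_charPoly_pos {a : ℍ[ℝ]} (ha : a ∉ Set.range (algebraMap ℝ ℍ[ℝ])) (s : ℝ) :
    0 < eval s (charPoly a) := by
  simp only [charPoly, eval_add, eval_sub, eval_pow, eval_mul, eval_C, eval_X]
  nlinarith [re_sq_lt_normSq ha, sq_nonneg (s - a.re)]

theorem charPoly_eq_minpoly {a r : ℍ[ℝ]} (ha : a ∉ Set.range (algebraMap ℝ ℍ[ℝ]))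
    (hr : aeval r (charPoly a) = 0) : charPoly a = minpoly ℝ r := by
  have hr_int : IsIntegral ℝ r := ⟨_, monic_charPoly a, hr⟩
  have hr_nonreal : r ∉ (algebraMap ℝ ℍ[ℝ]).range := by
    rintro ⟨s, rfl⟩
    rw [aeval_algebraMap_apply, map_eq_zero_iff _ (algebraMap ℝ ℍ[ℝ]).injective] at hr
    exact (eval_charPoly_pos ha s).ne' hr
  refine (eq_of_dvd_of_natDegree_le_of_leadingCoeff (minpoly.dvd ℝ r hr) ?_ ?_).symm
  · rw [natDegree_charPoly]
    exact (minpoly.two_le_natDegree_iff hr_int).mpr hr_nonreal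
  · rw [(minpoly.monic hr_int).leadingCoeff, (monic_charPoly a).leadingCoeff]

theorem quadEquiv_of_charPoly_eq {a b : ℍ[ℝ]} (h : charPoly a = charPoly b) : QuadEquiv a b := by
  have h1 := congr_arg (coeff · 1) h
  have h0 := congr_arg (coeff · 0) h
  simp only [coeff_charPoly_one, coeff_charPoly_zero, neg_inj] at h1 h0
  exact ⟨h1, h0⟩

theorem quadEquiv_of_aeval_charPoly_eq_zero {a b r : ℍ[ℝ]}
    (ha : a ∉ Set.range (algebraMap ℝ ℍ[ℝ])) (hra : aeval r (charPoly a) = 0)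
    (hrb : aeval r (charPoly b) = 0) : QuadEquiv a b := by
  refine quadEquiv_of_charPoly_eq (eq_of_dvd_of_natDegree_le_of_leadingCoeff ?_ ?_ ?_)
  · rw [charPoly_eq_minpoly ha hra]
    exact minpoly.dvd ℝ r hrb
  · rw [natDegree_charPoly, natDegree_charPoly]
  · rw [(monic_charPoly a).leadingCoeff, (monic_charPoly b).leadingCoeff]

end Quaternion

open Quaternion

theorem sphericalRoot_iff {f : ℍ[ℝ][X]} {a : ℍ[ℝ]} :
    SphericalRoot f a ↔ a ∉ Set.range (algebraMap ℝ ℍ[ℝ]) ∧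
      ∀ r, aeval r (charPoly a) = 0 → eval r f = 0 := by
  simp only [SphericalRoot, aeval_charPoly]

namespace SphericalRoot

variable {f g : ℍ[ℝ][X]} {a μ : ℍ[ℝ]}

theorem map_charPoly_dvd (h : SphericalRoot f a) : (charPoly a).map (algebraMap ℝ ℍ[ℝ]) ∣ f := by
  rw [sphericalRoot_iff] at h
  have ha_ne_star : a ≠ star a := fun h' => h.1 ⟨a.re, (star_eq_self.mp h'.symm).symm⟩
  exact map_dvd_of_eval_eq_zero (monic_charPoly a) (natDegree_charPoly a) ha_ne_star
    (aeval_charPoly_self a) (aeval_charPoly_star a) (h.2 _ (aeval_charPoly_self a))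
    (h.2 _ (aeval_charPoly_star a))

theorem of_map_charPoly_mul (h : SphericalRoot ((charPoly μ).map (algebraMap ℝ ℍ[ℝ]) * g) a)
    (hne : ¬QuadEquiv a μ) : SphericalRoot g a := by
  rw [sphericalRoot_iff] at h ⊢
  refine ⟨h.1, fun r hr => ?_⟩
  have hμr : aeval r (charPoly μ) ≠ 0 := fun hμr =>
    hne (quadEquiv_of_aeval_charPoly_eq_zero h.1 hr hμr)
  have hfr := h.2 r hr
  rw [eval_map_algebraMap_mul] at hfr
  exact (mul_eq_zero.mp hfr).resolve_right hμr

end SphericalRoot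

theorem card_spherical_root_classes_le
    (f : Polynomial (Quaternion ℝ)) (hf : f ≠ 0) (k : ℕ)
    (lam : Fin k → Quaternion ℝ)
    (hsph : ∀ i, SphericalRoot f (lam i))
    (hne : ∀ i j, i ≠ j → ¬ QuadEquiv (lam i) (lam j)) :
    2 * k ≤ f.natDegree := by
  induction k generalizing f with
  | zero => exact Nat.zero_le _
  | succ k ih =>
    obtain ⟨g, rfl⟩ := (hsph (Fin.last k)).map_charPoly_dvd
    have hg : g ≠ 0 := right_ne_zero_of_mul hf
    have hg_deg := ih g hg (fun i => lam i.castSucc)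
      (fun i => (hsph _).of_map_charPoly_mul (hne _ _ (Fin.castSucc_lt_last i).ne))
      (fun i j hij => hne _ _ ((Fin.castSucc_injective k).ne hij))
    rw [natDegree_map_charPoly_mul _ hg]
    omega
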